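/- Let w : ℝⁿ → ℝ be continuous and suppose that whenever a C¹ function ψ touches w from above at a point x (i.e., ψ(x) = w(x) and ψ ≥ w near x) one has ∇ψ(x) = 0; and similarly whenever ψ touches w from below at x one has ∇ψ(x) = 0. Then w is constant on ℝⁿ. (Viscosity solutions of |∇w| = 0 are constants.) -/

import Mathlib

/-!
Test `w` from above at a point `x` with the paraboloid `K ‖y - x‖² + c`, where `K` exceeds the
oscillation of `w` on the unit ball around `x`: the maximum of `w - K ‖· - x‖²` on that ball is
interior, so the paraboloid touches `w` from above there, its gradient `2K (z - x)` vanishes, and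
the contact point is `x` itself. Hence `w y ≤ w x + K ‖y - x‖²` near `x`. The same argument for
`-w` gives `|w y - w x| = O(‖y - x‖²)`, so `w` is differentiable with zero derivative everywhere,
and therefore constant.
-/

open Metric Filter Topology Asymptotics

theorem hasFDerivAt_zero_of_isBigO_norm_sub_sq {E F : Type*} [NormedAddCommGroup E]
    [NormedSpace ℝ E] [NormedAddCommGroup F] [NormedSpace ℝ F] {f : E → F} {x : E}
    (h : (fun y => f y - f x) =O[𝓝 x] fun y => ‖y - x‖ ^ 2) :
    HasFDerivAt f (0 : E →L[ℝ] F) x := by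
  refine .of_isLittleO ?_
  simp only [zero_apply, sub_zero]
  have hsub : Tendsto (fun y => y - x) (𝓝 x) (𝓝 0) := tendsto_sub_nhds_zero_iff.mpr tendsto_id
  exact h.trans_isLittleO ((isLittleO_norm_pow_id one_lt_two).comp_tendsto hsub)

section InnerProductSpace

variable {E : Type*} [NormedAddCommGroup E] [InnerProductSpace ℝ E]

theorem eq_of_fderiv_sq_norm_sub_eq_zero {K c : ℝ} (hK : K ≠ 0) {x z : E}
    (h : fderiv ℝ (fun y => K * ‖y - x‖ ^ 2 + c) z = 0) : z = x := by
  have hd : HasFDerivAt (fun y => K * ‖y - x‖ ^ 2 + c) (K • 2 • innerSL ℝ (z - x)) z := by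
    simpa using (((hasFDerivAt_id z).sub_const x).norm_sq.const_mul K).add_const c
  have := congrArg (fun L => L (z - x)) (hd.fderiv.symm.trans h)
  simpa [hK, ← inner_sub_left, sub_eq_zero] using this

/-- `w` is a viscosity subsolution of `|∇w| = 0`. -/
def IsViscositySubsolutionGradZero (w : E → ℝ) : Prop :=
  ∀ (x : E) (ψ : E → ℝ), ContDiff ℝ 1 ψ → ψ x = w x →
    (∃ r > 0, ∀ y ∈ ball x r, w y ≤ ψ y) → fderiv ℝ ψ x = 0

theorem isViscositySubsolutionGradZero_neg {w : E → ℝ}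
    (hw : ∀ (x : E) (ψ : E → ℝ), ContDiff ℝ 1 ψ → ψ x = w x →
      (∃ r > 0, ∀ y ∈ ball x r, ψ y ≤ w y) → fderiv ℝ ψ x = 0) :
    IsViscositySubsolutionGradZero (-w) := by
  rintro x ψ hψ hψx ⟨r, hr, hle⟩
  have := hw x (-ψ) hψ.neg (by simp [hψx]) ⟨r, hr, fun y hy => by simpa using neg_le.1 (hle y hy)⟩
  simpa [fderiv_neg] using this

theorem IsViscositySubsolutionGradZero.exists_eventually_le_add_sq [ProperSpace E] {w : E → ℝ}
    (hsub : IsViscositySubsolutionGradZero w) (hw : Continuous w) (x : E) :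
    ∃ K, 0 ≤ K ∧ ∀ᶠ y in 𝓝 x, w y ≤ w x + K * ‖y - x‖ ^ 2 := by
  have hx : x ∈ closedBall x 1 := mem_closedBall_self zero_le_one
  obtain ⟨m, -, hm⟩ := (isCompact_closedBall x 1).exists_isMaxOn ⟨x, hx⟩ hw.continuousOn
  have hwm : ∀ y ∈ closedBall x 1, w y ≤ w m := fun y hy => hm hy
  obtain ⟨K, hK⟩ := exists_gt (w m - w x)
  have hK_pos : 0 < K := by linarith [hwm x hx]
  set u := fun y => w y - K * ‖y - x‖ ^ 2
  obtain ⟨z, hz, hzmax⟩ :=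
    (isCompact_closedBall x 1).exists_isMaxOn ⟨x, hx⟩ (by fun_prop : Continuous u).continuousOn
  have hux : w x ≤ u z := by simpa [u] using hzmax hx
  have hz_int : dist z x < 1 := by
    refine (mem_closedBall.1 hz).lt_of_ne fun h => ?_
    simp only [u, ← dist_eq_norm, h, one_pow, mul_one] at hux
    linarith [hwm z hz]
  have hflat : fderiv ℝ (fun y => K * ‖y - x‖ ^ 2 + u z) z = 0 := by
    refine hsub z _
      ((contDiff_const.mul ((contDiff_norm_sq ℝ).comp (contDiff_id.sub contDiff_const))).add
        contDiff_const) (by simp [u]) ⟨1 - dist z x, by linarith, fun y hy => ?_⟩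
    have hy : y ∈ closedBall x 1 :=
      mem_closedBall.2 ((dist_triangle y z x).trans (by linarith [mem_ball.1 hy]))
    have : u y ≤ u z := hzmax hy
    simp only [u] at this ⊢
    linarith
  obtain rfl := eq_of_fderiv_sq_norm_sub_eq_zero hK_pos.ne' hflat
  refine ⟨K, hK_pos.le, eventually_of_mem (closedBall_mem_nhds z one_pos) fun y hy => ?_⟩
  have : u y ≤ u z := hzmax hy
  simp only [u, sub_self, norm_zero] at this
  linarith

end InnerProductSpace

/-- viscosity solutions of |∇w| = 0 on ℝⁿ are constant. -/
theorem stmt_17 (n : ℕ) (w : EuclideanSpace ℝ (Fin n) → ℝ) (hw : Continuous w)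
    (hsub : ∀ (x : EuclideanSpace ℝ (Fin n)) (ψ : EuclideanSpace ℝ (Fin n) → ℝ),
      ContDiff ℝ 1 ψ → ψ x = w x →
      (∃ r > 0, ∀ y ∈ Metric.ball x r, w y ≤ ψ y) → fderiv ℝ ψ x = 0)
    (hsup : ∀ (x : EuclideanSpace ℝ (Fin n)) (ψ : EuclideanSpace ℝ (Fin n) → ℝ),
      ContDiff ℝ 1 ψ → ψ x = w x →
      (∃ r > 0, ∀ y ∈ Metric.ball x r, ψ y ≤ w y) → fderiv ℝ ψ x = 0) :
    ∀ x y, w x = w y := by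
  have hderiv (x : EuclideanSpace ℝ (Fin n)) : HasFDerivAt w (0 : _ →L[ℝ] ℝ) x := by
    obtain ⟨K₁, hK₁, h₁⟩ :=
      IsViscositySubsolutionGradZero.exists_eventually_le_add_sq hsub hw x
    obtain ⟨K₂, hK₂, h₂⟩ :=
      (isViscositySubsolutionGradZero_neg hsup).exists_eventually_le_add_sq hw.neg x
    refine hasFDerivAt_zero_of_isBigO_norm_sub_sq (.of_bound (K₁ + K₂) ?_)
    filter_upwards [h₁, h₂] with y hy₁ hy₂
    simp only [Pi.neg_apply, Real.norm_eq_abs, abs_pow, abs_norm] at hy₂ ⊢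
    rw [abs_le]
    constructor <;> nlinarith [sq_nonneg ‖y - x‖]
  exact is_const_of_fderiv_eq_zero (fun x => (hderiv x).differentiableAt)
    (fun x => (hderiv x).fderiv)
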